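/- Let X_0 be a real-valued random variable such that 0 < G(r) < ∞ for every r ≥ 0. Then, writing m_r := E[U_r(X_0)], one has m_r² = o(E[(U_r(X_0))²]) as r → ∞. -/

import Mathlib

open MeasureTheory ProbabilityTheory Filter Asymptotics
open scoped ENNReal Topology NNReal

noncomputable section

/-- The shrinking operator `U_r : ℝ → ℝ` (for `r ≥ 0`):
`U_r(x) = x - r` if `x > r`, `0` if `|x| ≤ r`, and `x + r` if `x < -r`. -/
def shrink (r x : ℝ) : ℝ := if r < x then x - r else if x < -r then x + r else 0

variable {Ω : Type*}

/-- `G(r) := ∫₀^∞ t · P(|X| > t + r) dt`. -/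
def Gfun [MeasurableSpace Ω] (P : Measure Ω) (X : Ω → ℝ) (r : ℝ) : ℝ≥0∞ :=
  ∫⁻ t in Set.Ioi (0 : ℝ), ENNReal.ofReal t * P {ω | t + r < |X ω|}

/-- Strict stationarity of a two-sided sequence of random variables: for all `j, l ∈ ℤ`
and `m ≥ 0`, the random vectors `(X_j, …, X_{j+m})` and `(X_l, …, X_{l+m})` have the
same distribution. -/
def StrictlyStationary [MeasurableSpace Ω] (P : Measure Ω) (X : ℤ → Ω → ℝ) : Prop :=
  ∀ (j l : ℤ) (m : ℕ),
    Measure.map (fun ω => fun i : Fin (m + 1) => X (j + i) ω) P =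
    Measure.map (fun ω => fun i : Fin (m + 1) => X (l + i) ω) P

/-- The correlation coefficient of two real random variables. -/
def corr [MeasurableSpace Ω] (P : Measure Ω) (f g : Ω → ℝ) : ℝ :=
  (∫ ω, (f ω - ∫ x, f x ∂P) * (g ω - ∫ x, g x ∂P) ∂P) /
    (Real.sqrt (∫ ω, (f ω - ∫ x, f x ∂P) ^ 2 ∂P) *
      Real.sqrt (∫ ω, (g ω - ∫ x, g x ∂P) ^ 2 ∂P))

/-- The maximal correlation coefficient `ρ(𝒜, ℬ)`: the supremum of `|Corr(f,g)|` over
square-integrable `f` measurable w.r.t. `𝒜` and `g` measurable w.r.t. `ℬ`. -/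
def maxCorr [mΩ : MeasurableSpace Ω] (P : Measure Ω) (A B : MeasurableSpace Ω) : ℝ :=
  sSup { c | ∃ f g : Ω → ℝ, Measurable[A] f ∧ Measurable[B] g ∧
    MemLp (α := Ω) (m0 := mΩ) f 2 P ∧ MemLp (α := Ω) (m0 := mΩ) g 2 P ∧ c = |@corr Ω mΩ P f g| }

/-- The strong mixing coefficient `α(𝒜, ℬ)`. -/
def alphaMix [MeasurableSpace Ω] (P : Measure Ω) (A B : MeasurableSpace Ω) : ℝ :=
  sSup { c | ∃ s t : Set Ω, MeasurableSet[A] s ∧ MeasurableSet[B] t ∧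
    c = |(P (s ∩ t)).toReal - (P s).toReal * (P t).toReal| }

/-- The σ-field generated by the random variables `X k`, `k ∈ S`. -/
def genFrom [MeasurableSpace Ω] (X : ℤ → Ω → ℝ) (S : Set ℤ) : MeasurableSpace Ω :=
  ⨆ k ∈ S, MeasurableSpace.comap (X k) inferInstance

/-- `ρ(n) = ρ(σ(X_k, k ≤ 0), σ(X_k, k ≥ n))`. -/
def rhoCoef [MeasurableSpace Ω] (P : Measure Ω) (X : ℤ → Ω → ℝ) (n : ℕ) : ℝ :=
  maxCorr P (genFrom X {k | k ≤ 0}) (genFrom X {k | (n : ℤ) ≤ k})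

/-- `α(n) = α(σ(X_k, k ≤ 0), σ(X_k, k ≥ n))`. -/
def alphaCoef [MeasurableSpace Ω] (P : Measure Ω) (X : ℤ → Ω → ℝ) (n : ℕ) : ℝ :=
  alphaMix P (genFrom X {k | k ≤ 0}) (genFrom X {k | (n : ℤ) ≤ k})

/-- `ρ*(n)`: the supremum of `ρ(σ(X_k, k ∈ S), σ(X_k, k ∈ T))` over all pairs of nonempty
disjoint `S, T ⊆ ℤ` with `dist(S,T) ≥ n`. -/
def rhoStarCoef [MeasurableSpace Ω] (P : Measure Ω) (X : ℤ → Ω → ℝ) (n : ℕ) : ℝ :=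
  sSup { c | ∃ S T : Set ℤ, S.Nonempty ∧ T.Nonempty ∧ Disjoint S T ∧
    (∀ s ∈ S, ∀ t ∈ T, (n : ℤ) ≤ |s - t|) ∧
    c = maxCorr P (genFrom X S) (genFrom X T) }

/-- `Y_{k,r} := U_r(X_k) - E[U_r(X_0)]`. -/
def Ymix [MeasurableSpace Ω] (P : Measure Ω) (X : ℤ → Ω → ℝ) (k : ℤ) (r : ℝ) (ω : Ω) : ℝ :=
  shrink r (X k ω) - ∫ ω', shrink r (X 0 ω') ∂P

/-!
`U_r(X₀)` vanishes off the event `{|X₀| > r}`, so by Cauchy–Schwarz (Jensen on that event)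
`m_r² ≤ P(|X₀| > r) · E[U_r(X₀)²]`, and the tail probability tends to `0`. The finiteness of `G`
is what makes this legitimate: by the layer-cake formula `E[U_r(X₀)²] = 2 G(r)`, so `U_r(X₀)` is
square integrable.
-/

lemma measurable_shrink (r : ℝ) : Measurable (shrink r) :=
  Measurable.ite (measurableSet_lt measurable_const measurable_id)
    (measurable_id.sub measurable_const)
    (Measurable.ite (measurableSet_lt measurable_id measurable_const)
      (measurable_id.add measurable_const) measurable_const)

lemma abs_shrink {r : ℝ} (hr : 0 ≤ r) (x : ℝ) : |shrink r x| = max (|x| - r) 0 := by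
  unfold shrink
  split_ifs with h₁ h₂
  · rw [abs_of_pos (by linarith), abs_of_pos (by linarith), max_eq_left (by linarith)]
  · rw [abs_of_neg (by linarith), abs_of_neg (by linarith), max_eq_left (by linarith)]
    ring
  · have : |x| ≤ r := abs_le.2 ⟨by linarith, by linarith⟩
    rw [abs_zero, max_eq_right (by linarith)]

lemma shrink_eq_zero_of_abs_le {r x : ℝ} (h : |x| ≤ r) : shrink r x = 0 := by
  rw [← abs_eq_zero, abs_shrink ((abs_nonneg x).trans h), max_eq_right (by linarith)]

lemma lt_abs_shrink_iff {r t x : ℝ} (hr : 0 ≤ r) (ht : 0 ≤ t) :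
    t < |shrink r x| ↔ t + r < |x| := by
  rw [abs_shrink hr, lt_max_iff, lt_sub_iff_add_lt]
  exact or_iff_left ht.not_gt

lemma lintegral_shrink_sq [MeasurableSpace Ω] (P : Measure Ω) {X : Ω → ℝ}
    (hX : AEMeasurable X P) {r : ℝ} (hr : 0 ≤ r) :
    ∫⁻ ω, ENNReal.ofReal (shrink r (X ω) ^ 2) ∂P = 2 * Gfun P X r := by
  have layer := lintegral_rpow_eq_lintegral_meas_lt_mul P
    (Eventually.of_forall fun ω => abs_nonneg (shrink r (X ω)))
    ((measurable_shrink r).comp_aemeasurable hX).abs two_pos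
  simp only [Real.rpow_two, sq_abs] at layer
  rw [layer, Gfun, ENNReal.ofReal_ofNat]
  congr 1
  refine setLIntegral_congr_fun measurableSet_Ioi fun t ht => ?_
  simp only [lt_abs_shrink_iff hr (le_of_lt ht)]
  norm_num [mul_comm]

lemma memLp_two_shrink [MeasurableSpace Ω] {P : Measure Ω} {X : Ω → ℝ}
    (hX : AEMeasurable X P) {r : ℝ} (hr : 0 ≤ r) (hG : Gfun P X r ≠ ∞) :
    MemLp (fun ω => shrink r (X ω)) 2 P := by
  have hmeas : AEStronglyMeasurable (fun ω => shrink r (X ω)) P :=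
    ((measurable_shrink r).comp_aemeasurable hX).aestronglyMeasurable
  rw [memLp_two_iff_integrable_sq hmeas]
  refine ⟨hmeas.pow 2, ?_⟩
  rw [hasFiniteIntegral_iff_ofReal (Eventually.of_forall fun ω => sq_nonneg _),
    lintegral_shrink_sq P hX hr]
  exact ENNReal.mul_lt_top (by norm_num) hG.lt_top

section CauchySchwarz

variable {α : Type*} [MeasurableSpace α] {μ : Measure α} [IsFiniteMeasure μ] {f : α → ℝ}

lemma sq_integral_le_measureReal_univ_mul (hf : MemLp f 2 μ) :
    (∫ x, f x ∂μ) ^ 2 ≤ μ.real Set.univ * ∫ x, f x ^ 2 ∂μ := by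
  rcases eq_zero_or_neZero μ with rfl | hμ
  · simp
  set c := μ.real Set.univ
  have hc : 0 < c := by
    simp [c, measureReal_def, ENNReal.toReal_pos_iff, measure_lt_top, NeZero.ne μ]
  have jensen : (⨍ x, f x ∂μ) ^ 2 ≤ ⨍ x, f x ^ 2 ∂μ :=
    (even_two.convexOn_pow).map_average_le (continuous_pow 2).continuousOn isClosed_univ
      (Eventually.of_forall fun x => Set.mem_univ _) (hf.integrable one_le_two)
      hf.integrable_sq
  rw [average_eq, average_eq, smul_eq_mul, smul_eq_mul, mul_pow] at jensen
  calc (∫ x, f x ∂μ) ^ 2 = c ^ 2 * (c⁻¹ ^ 2 * (∫ x, f x ∂μ) ^ 2) := by field_simp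
    _ ≤ c ^ 2 * (c⁻¹ * ∫ x, f x ^ 2 ∂μ) := by gcongr
    _ = c * ∫ x, f x ^ 2 ∂μ := by field_simp

lemma sq_integral_le_measureReal_mul {s : Set α} (hfs : ∀ x ∉ s, f x = 0) (hf : MemLp f 2 μ) :
    (∫ x, f x ∂μ) ^ 2 ≤ μ.real s * ∫ x, f x ^ 2 ∂μ := by
  have hfs2 : ∀ x ∉ s, f x ^ 2 = 0 := fun x hx => by rw [hfs x hx, zero_pow two_ne_zero]
  have := sq_integral_le_measureReal_univ_mul (hf.restrict s)
  rwa [setIntegral_eq_integral_of_forall_compl_eq_zero hfs,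
    setIntegral_eq_integral_of_forall_compl_eq_zero hfs2, measureReal_restrict_apply_univ] at this

end CauchySchwarz

lemma tendsto_measure_lt_atTop {α : Type*} [MeasurableSpace α] (μ : Measure α)
    [IsFiniteMeasure μ] {g : α → ℝ} (hg : AEMeasurable g μ) :
    Tendsto (fun r : ℝ => μ {x | r < g x}) atTop (𝓝 0) := by
  have h := tendsto_measure_iInter_atTop (μ := μ) (s := fun r : ℝ => {x | r < g x})
    (fun r => nullMeasurableSet_lt aemeasurable_const hg)
    (fun a b hab x hx => lt_of_le_of_lt hab hx) ⟨0, measure_ne_top μ _⟩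
  rwa [Set.iInter_eq_empty_iff.2 fun x => ⟨g x, lt_irrefl (g x)⟩, measure_empty] at h

/-- **Lemma 4.1 (first part).** `m_r² = o(E[(U_r(X_0))²])` as `r → ∞`. -/
theorem mean_sq_littleO_of_G
    [MeasurableSpace Ω] (P : Measure Ω) [IsProbabilityMeasure P]
    (X₀ : Ω → ℝ) (hmeas : Measurable X₀)
    (hG : ∀ r : ℝ, 0 ≤ r → 0 < Gfun P X₀ r ∧ Gfun P X₀ r < ∞) :
    (fun r : ℝ => (∫ ω, shrink r (X₀ ω) ∂P) ^ 2) =o[atTop]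
      fun r : ℝ => ∫ ω, shrink r (X₀ ω) ^ 2 ∂P := by
  set tail : ℝ → ℝ := fun r => P.real {ω | r < |X₀ ω|}
  have htail : Tendsto tail atTop (𝓝 0) := by
    simpa [tail, measureReal_def, Function.comp_def] using
      (ENNReal.tendsto_toReal ENNReal.zero_ne_top).comp
        (tendsto_measure_lt_atTop P hmeas.abs.aemeasurable)
  have hbound : ∀ᶠ r in atTop, ‖(∫ ω, shrink r (X₀ ω) ∂P) ^ 2‖ ≤
      1 * ‖tail r * ∫ ω, shrink r (X₀ ω) ^ 2 ∂P‖ := by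
    filter_upwards [eventually_ge_atTop 0] with r hr
    rw [one_mul, Real.norm_of_nonneg (sq_nonneg _), Real.norm_of_nonneg
      (mul_nonneg measureReal_nonneg (integral_nonneg fun ω => sq_nonneg _))]
    exact sq_integral_le_measureReal_mul (fun ω hω => shrink_eq_zero_of_abs_le (not_lt.1 hω))
      (memLp_two_shrink hmeas.aemeasurable hr (hG r hr).2.ne)
  exact (IsBigO.of_bound 1 hbound).trans_isLittleO <| by
    simpa using ((isLittleO_one_iff ℝ).2 htail).mul_isBigO (isBigO_refl
      (fun r : ℝ => ∫ ω, shrink r (X₀ ω) ^ 2 ∂P) atTop)
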